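/- For every α ∈ H, the adjoint of the right action R_α is itself a right action: (R_α)† = R_{α'}, where α' := (id_H ⊗ α†)(δ(u(1))) with α† : H → ℂ the linear map x ↦ ⟨α, x⟩. -/

import Mathlib

/-! Evaluating the Frobenius law at `x ⊗ u 1` and using the unit law gives
`δ x = (m ⊗ id) (x ⊗ δ (u 1))`. Pairing this with `y ⊗ α` contracts the second leg of the
copairing `δ (u 1)` against `α`, so `⟪x, m (y ⊗ α)⟫ = ⟪δ x, y ⊗ α⟫ = ⟪m (x ⊗ α'), y⟫`. -/

noncomputable section

open scoped TensorProduct ComplexConjugate InnerProductSpace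

open scoped TensorProduct ComplexConjugate InnerProductSpace

variable {H : Type*} [NormedAddCommGroup H] [InnerProductSpace ℂ H] [FiniteDimensional ℂ H]

namespace TensorIP

variable (H) in
/-- A basis of `H ⊗ H` built from an orthonormal basis of `H`. -/
def tb : Module.Basis (Fin (Module.finrank ℂ H) × Fin (Module.finrank ℂ H)) ℂ (H ⊗[ℂ] H) :=
  Module.Basis.tensorProduct (stdOrthonormalBasis ℂ H).toBasis (stdOrthonormalBasis ℂ H).toBasis

variable (H) in
/-- The canonical inner product space structure on `H ⊗ H`, which is determined by
`⟪a ⊗ b, c ⊗ d⟫ = ⟪a,c⟫ * ⟪b,d⟫` (see `TensorIP.inner_tmul` below). -/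
def core : InnerProductSpace.Core ℂ (H ⊗[ℂ] H) where
  inner x y := ∑ p, conj ((tb H).repr x p) * ((tb H).repr y p)
  conj_inner_symm x y := by
    simp only [map_sum, map_mul, starRingEnd_self_apply]
    exact Finset.sum_congr rfl fun p _ => by ring
  re_inner_nonneg x := by
    show 0 ≤ RCLike.re (∑ p, conj ((tb H).repr x p) * ((tb H).repr x p))
    have h : ∀ p : Fin (Module.finrank ℂ H) × Fin (Module.finrank ℂ H),
        conj ((tb H).repr x p) * ((tb H).repr x p)
          = ((Complex.normSq ((tb H).repr x p) : ℝ) : ℂ) := fun p => by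
      rw [mul_comm, Complex.mul_conj]
    simp only [h]
    rw [map_sum]
    refine Finset.sum_nonneg fun p _ => ?_
    simp [Complex.normSq_nonneg]
  add_left x y z := by
    simp only [map_add, Finsupp.add_apply]
    rw [← Finset.sum_add_distrib]
    exact Finset.sum_congr rfl fun p _ => by ring
  smul_left x y r := by
    simp only [map_smul, Finsupp.smul_apply, smul_eq_mul, map_mul, Finset.mul_sum]
    exact Finset.sum_congr rfl fun p _ => by ring
  definite x hx := by
    have hx' : ∑ p, conj ((tb H).repr x p) * ((tb H).repr x p) = 0 := hx
    have h2 : ∑ p, ((Complex.normSq ((tb H).repr x p) : ℝ) : ℂ) = 0 := by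
      rw [← hx']
      exact Finset.sum_congr rfl fun p _ => by rw [mul_comm, Complex.mul_conj]
    have h3 : ∑ p, Complex.normSq ((tb H).repr x p) = 0 := by exact_mod_cast h2
    have h4 : ∀ p ∈ Finset.univ, Complex.normSq ((tb H).repr x p) = 0 :=
      (Finset.sum_eq_zero_iff_of_nonneg fun p _ => Complex.normSq_nonneg _).mp h3
    have h5 : (tb H).repr x = 0 := by
      ext p
      exact Complex.normSq_eq_zero.mp (h4 p (Finset.mem_univ p))
    simpa using (tb H).repr.map_eq_zero_iff.mp h5

instance : NormedAddCommGroup (H ⊗[ℂ] H) :=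
  @InnerProductSpace.Core.toNormedAddCommGroup ℂ (H ⊗[ℂ] H) _ _ _ (core H)

instance : InnerProductSpace ℂ (H ⊗[ℂ] H) := InnerProductSpace.ofCore (core H).toCore

-- `LinearMap.adjoint m` is taken for the inner product of `TensorIP`; Mathlib's own instance
-- on `H ⊗ H` must not be picked up by `⟪·, ·⟫` here.
attribute [-instance] TensorProduct.instInner

theorem inner_tmul (a b c d : H) :
    ⟪a ⊗ₜ[ℂ] b, c ⊗ₜ[ℂ] d⟫_ℂ = ⟪a, c⟫_ℂ * ⟪b, d⟫_ℂ := by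
  have key : ∀ (x y : H) (p : Fin (Module.finrank ℂ H) × Fin (Module.finrank ℂ H)),
      (tb H).repr (x ⊗ₜ[ℂ] y) p
        = ⟪(stdOrthonormalBasis ℂ H) p.1, x⟫_ℂ * ⟪(stdOrthonormalBasis ℂ H) p.2, y⟫_ℂ := by
    rintro x y ⟨i, j⟩
    rw [tb, Module.Basis.tensorProduct_repr_tmul_apply, smul_eq_mul,
      OrthonormalBasis.coe_toBasis_repr_apply, OrthonormalBasis.coe_toBasis_repr_apply,
      OrthonormalBasis.repr_apply_apply, OrthonormalBasis.repr_apply_apply, mul_comm]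
  show (∑ p, conj ((tb H).repr (a ⊗ₜ[ℂ] b) p) * ((tb H).repr (c ⊗ₜ[ℂ] d) p)) = _
  simp only [key, map_mul]
  rw [← Finset.univ_product_univ, Finset.sum_product]
  have h : ∀ i j : Fin (Module.finrank ℂ H),
      (conj ⟪(stdOrthonormalBasis ℂ H) i, a⟫_ℂ * conj ⟪(stdOrthonormalBasis ℂ H) j, b⟫_ℂ) *
        (⟪(stdOrthonormalBasis ℂ H) i, c⟫_ℂ * ⟪(stdOrthonormalBasis ℂ H) j, d⟫_ℂ)
      = (⟪a, (stdOrthonormalBasis ℂ H) i⟫_ℂ * ⟪(stdOrthonormalBasis ℂ H) i, c⟫_ℂ) *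
        (⟪b, (stdOrthonormalBasis ℂ H) j⟫_ℂ * ⟪(stdOrthonormalBasis ℂ H) j, d⟫_ℂ) := by
    intro i j
    rw [inner_conj_symm, inner_conj_symm]; ring
  simp only [h]
  rw [← Finset.sum_mul_sum]
  rw [OrthonormalBasis.sum_inner_mul_inner, OrthonormalBasis.sum_inner_mul_inner]

end TensorIP

/-- `(H, m, u)` is a commutative †-Frobenius monoid: `m` is associative and commutative,
`u 1` is a two-sided unit for `m`, and the Frobenius law
`(m ⊗ id) ∘ (id ⊗ δ) = δ ∘ m` holds, where `δ := m†`. -/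
def IsFrobenius (m : H ⊗[ℂ] H →ₗ[ℂ] H) (u : ℂ →ₗ[ℂ] H) : Prop :=
  (m ∘ₗ TensorProduct.map m LinearMap.id
      = m ∘ₗ TensorProduct.map LinearMap.id m ∘ₗ (TensorProduct.assoc ℂ H H H).toLinearMap)
    ∧ (m ∘ₗ (TensorProduct.comm ℂ H H).toLinearMap = m)
    ∧ (∀ x : H, m (u 1 ⊗ₜ[ℂ] x) = x)
    ∧ (∀ x : H, m (x ⊗ₜ[ℂ] u 1) = x)
    ∧ (TensorProduct.map m LinearMap.id ∘ₗ (TensorProduct.assoc ℂ H H H).symm.toLinearMap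
        ∘ₗ TensorProduct.map LinearMap.id (LinearMap.adjoint m)
      = LinearMap.adjoint m ∘ₗ m)

/-- `ψ` is a copyable element: `δ ψ = ψ ⊗ ψ` and `ε ψ = 1`, where `δ := m†`, `ε := u†`. -/
def Copyable (m : H ⊗[ℂ] H →ₗ[ℂ] H) (u : ℂ →ₗ[ℂ] H) (ψ : H) : Prop :=
  LinearMap.adjoint m ψ = ψ ⊗ₜ[ℂ] ψ ∧ LinearMap.adjoint u ψ = 1

/-- The right action `R_α : H → H`, `x ↦ m (x ⊗ α)`. -/
def rightAction (m : H ⊗[ℂ] H →ₗ[ℂ] H) (α : H) : H →ₗ[ℂ] H :=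
  m ∘ₗ (TensorProduct.mk ℂ H H).flip α

/-- The element `α' := (id_H ⊗ α†) (δ (u 1))`, under the identification `H ⊗ ℂ ≃ H`,
where `α† : H → ℂ` is `x ↦ ⟪α, x⟫` and `δ := m†`. -/
def conjElem (m : H ⊗[ℂ] H →ₗ[ℂ] H) (u : ℂ →ₗ[ℂ] H) (α : H) : H :=
  TensorProduct.rid ℂ H
    ((TensorProduct.map LinearMap.id (innerₛₗ ℂ α)) (LinearMap.adjoint m (u 1)))

section Frobenius

open TensorProduct

-- `LinearMap.adjoint m` is taken for the inner product of `TensorIP`; Mathlib's own instance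
-- on `H ⊗ H` must not be picked up by `⟪·, ·⟫` here.
attribute [-instance] TensorProduct.instInner

variable (m : H ⊗[ℂ] H →ₗ[ℂ] H)

theorem adjoint_apply_eq_of_frobenius {e : H} (he : ∀ x : H, m (x ⊗ₜ[ℂ] e) = x)
    (hfrob : map m LinearMap.id ∘ₗ (TensorProduct.assoc ℂ H H H).symm.toLinearMap
        ∘ₗ map LinearMap.id (LinearMap.adjoint m) = LinearMap.adjoint m ∘ₗ m)
    (x : H) :
    LinearMap.adjoint m x = map m LinearMap.id
      ((TensorProduct.assoc ℂ H H H).symm (x ⊗ₜ[ℂ] LinearMap.adjoint m e)) := by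
  simpa [he x] using (LinearMap.congr_fun hfrob (x ⊗ₜ[ℂ] e)).symm

theorem inner_map_assoc_symm_tmul (x y α : H) (t : H ⊗[ℂ] H) :
    ⟪map m LinearMap.id ((TensorProduct.assoc ℂ H H H).symm (x ⊗ₜ[ℂ] t)), y ⊗ₜ[ℂ] α⟫_ℂ
      = ⟪m (x ⊗ₜ[ℂ] TensorProduct.rid ℂ H (map LinearMap.id (innerₛₗ ℂ α) t)), y⟫_ℂ := by
  induction t using TensorProduct.induction_on with
  | zero => simp only [tmul_zero, map_zero, inner_zero_left]
  | tmul a b =>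
    simp only [map_tmul, LinearMap.id_apply, rid_tmul, assoc_symm_tmul, innerₛₗ_apply_apply,
      tmul_smul, map_smul, inner_smul_left, TensorIP.inner_tmul, inner_conj_symm, mul_comm]
  | add s s' hs hs' =>
    simp only [map_add, tmul_add, inner_add_left, hs, hs']

end Frobenius

/-- The adjoint of the right action `R_α` is the right action of `α'`. -/
theorem adjoint_rightAction (m : H ⊗[ℂ] H →ₗ[ℂ] H) (u : ℂ →ₗ[ℂ] H)
    (hfrob : IsFrobenius m u) (α : H) :
    LinearMap.adjoint (rightAction m α) = rightAction m (conjElem m u α) := by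
  obtain ⟨-, -, -, hunit, hlaw⟩ := hfrob
  refine ((LinearMap.eq_adjoint_iff (rightAction m (conjElem m u α)) (rightAction m α)).mpr
    fun x y => ?_).symm
  change ⟪m (x ⊗ₜ[ℂ] conjElem m u α), y⟫_ℂ = ⟪x, m (y ⊗ₜ[ℂ] α)⟫_ℂ
  rw [← LinearMap.adjoint_inner_left m, adjoint_apply_eq_of_frobenius m hunit hlaw,
    inner_map_assoc_symm_tmul, conjElem]
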